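/- For all natural numbers u, r, s with u ≤ s, and for each choice of sign ε ∈ {+1, −1}, the following identity holds in K: [s−u choose r] = ∑_{p=0}^{r} (−1)^p · v^{ε(p(s−u−r+1) + ru)} · [u choose p] · [s−p choose r−p]. -/

import Mathlib

open PowerSeries Finset

noncomputable section

/-- The base field `K = ℚ(v)`. -/
abbrev K : Type := RatFunc ℚ

/-- The indeterminate `v` of `K = ℚ(v)`. -/
noncomputable def v : K := RatFunc.X

/-- The quantum integer `[m] = (v^m - v^{-m})/(v - v⁻¹)`. -/
noncomputable def qint (m : ℤ) : K := (v ^ m - v ^ (-m)) / (v - v⁻¹)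

/-- The quantum factorial `[n]! = [n][n-1]⋯[1]`. -/
noncomputable def qfact (n : ℕ) : K := ∏ i ∈ Finset.range n, qint (i + 1)

/-- The quantum binomial coefficient `[m choose n]`. -/
noncomputable def qbinom (m n : ℤ) : K :=
  if 0 ≤ n ∧ n ≤ m then qfact m.toNat / (qfact n.toNat * qfact (m - n).toNat) else 0

/-- The ring `R = K[[X]]`. -/
abbrev R : Type := PowerSeries K

/-- `T = 1 + X`, a unit of `R`. -/
noncomputable def T : R := 1 + PowerSeries.X

/-- `T⁻¹`, the inverse of the unit `T` in `R`. -/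
noncomputable def Tinv : R := Ring.inverse T

/-- `[T;r] = (v^r T - v^{-r} T⁻¹)/(v - v⁻¹)`. -/
noncomputable def bT (r : ℤ) : R :=
  (PowerSeries.C : K →+* R) ((v - v⁻¹)⁻¹) *
    ((PowerSeries.C : K →+* R) (v ^ r) * T - (PowerSeries.C : K →+* R) (v ^ (-r)) * Tinv)

/-- `[T⁻¹;r] = (v^r T⁻¹ - v^{-r} T)/(v - v⁻¹)`. -/
noncomputable def bTinv (r : ℤ) : R :=
  (PowerSeries.C : K →+* R) ((v - v⁻¹)⁻¹) *
    ((PowerSeries.C : K →+* R) (v ^ r) * Tinv - (PowerSeries.C : K →+* R) (v ^ (-r)) * T)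

/-- `[T;r]_{(j)} = [T;r][T;r-1]⋯[T;r-j+1]`. -/
noncomputable def bTdesc (r : ℤ) (j : ℕ) : R := ∏ i ∈ Finset.range j, bT (r - i)

/-- `[T;r]^{(j)} = [T;r+1][T;r+2]⋯[T;r+j]`. -/
noncomputable def bTasc (r : ℤ) (j : ℕ) : R := ∏ i ∈ Finset.range j, bT (r + 1 + i)

/-- `[T⁻¹;r]_{(j)} = [T⁻¹;r][T⁻¹;r-1]⋯[T⁻¹;r-j+1]`. -/
noncomputable def bTinvDesc (r : ℤ) (j : ℕ) : R := ∏ i ∈ Finset.range j, bTinv (r - i)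

/-!
Induction on `u`, for all integers `r` and all `s ≥ u`, with the sum taken over `p ≤ u` instead
of `p ≤ r` (the summands vanish for `p > min u r`). The `q`-Pascal rule
`[u+1, p] = v^{εp} [u, p] + v^{ε(p-u-1)} [u, p-1]` splits the summand for `u + 1` into `v^{εr}`
times the summand for `(u, r, s)` minus `v^{ε(s-u)}` times the summand for `(u, r-1, s-1)` at
`p - 1`. By induction these two sums are `[s-u, r]` and `[s-1-u, r-1]`, and the Pascal rule of
the opposite sign recombines them into `[s-u-1, r]`.
-/

theorem v_ne_zero : v ≠ 0 := RatFunc.X_ne_zero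

theorem v_zpow_ne_one {n : ℤ} (hn : n ≠ 0) : v ^ n ≠ 1 := fun h => hn <| by
  classical simpa [v] using congrArg (RatFunc.inftyValuation ℚ) h

theorem v_sub_v_inv_ne_zero : v - v⁻¹ ≠ 0 := by
  refine fun h => v_zpow_ne_one (n := 2) two_ne_zero ?_
  rw [zpow_two]
  nth_rewrite 2 [sub_eq_zero.1 h]
  exact mul_inv_cancel₀ v_ne_zero

theorem v_zpow_mul_zpow_eq {a b c d : ℤ} (h : a + b = c + d) : v ^ a * v ^ b = v ^ c * v ^ d := by
  rw [← zpow_add₀ v_ne_zero, ← zpow_add₀ v_ne_zero, h]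

theorem qint_ne_zero {m : ℤ} (hm : m ≠ 0) : qint m ≠ 0 := by
  refine div_ne_zero (fun h => v_zpow_ne_one (n := 2 * m) (by omega) ?_) v_sub_v_inv_ne_zero
  rw [two_mul, zpow_add₀ v_ne_zero]
  nth_rewrite 1 [sub_eq_zero.1 h]
  rw [← zpow_add₀ v_ne_zero, neg_add_cancel, zpow_zero]

theorem qint_add (x y : ℤ) : qint (x + y) = v ^ x * qint y + v ^ (-y) * qint x := by
  simp only [qint, mul_div_assoc', ← add_div, mul_sub, ← zpow_add₀ v_ne_zero]
  ring_nf

theorem qint_add_of_sign {ε : ℤ} (hε : ε = 1 ∨ ε = -1) (x y : ℤ) :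
    qint (x + y) = v ^ (ε * x) * qint y + v ^ (-(ε * y)) * qint x := by
  rcases hε with rfl | rfl
  · simp [qint_add]
  · rw [add_comm, qint_add]
    simp only [neg_one_mul, neg_neg]
    ring

theorem qfact_ne_zero (n : ℕ) : qfact n ≠ 0 :=
  prod_ne_zero_iff.2 fun i _ => qint_ne_zero (by omega)

theorem qfact_succ (n : ℕ) : qfact (n + 1) = qfact n * qint (n + 1) := by
  simp [qfact, prod_range_succ]

theorem qfact_zero : qfact 0 = 1 := prod_range_zero _

theorem qbinom_of_neg {m n : ℤ} (hn : n < 0) : qbinom m n = 0 := by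
  simp [qbinom]; omega

theorem qbinom_of_lt {m n : ℤ} (h : m < n) : qbinom m n = 0 := by
  simp [qbinom]; omega

theorem qbinom_natCast {m n : ℕ} (h : n ≤ m) :
    qbinom m n = qfact m / (qfact n * qfact (m - n)) := by
  simp [qbinom, h, show ((m : ℤ) - n).toNat = m - n by omega]

theorem qbinom_zero_right {m : ℤ} (hm : 0 ≤ m) : qbinom m 0 = 1 := by
  simp [qbinom, hm, qfact_zero, qfact_ne_zero]

theorem qbinom_self {m : ℤ} (hm : 0 ≤ m) : qbinom m m = 1 := by
  simp [qbinom, hm, qfact_zero, qfact_ne_zero]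

theorem qbinom_succ_add_succ {ε : ℤ} (hε : ε = 1 ∨ ε = -1) (k j : ℕ) :
    qbinom (k + j + 2 : ℕ) (k + 1 : ℕ) =
      v ^ (ε * (k + 1)) * qbinom (k + j + 1 : ℕ) (k + 1 : ℕ) +
        v ^ (-(ε * (j + 1))) * qbinom (k + j + 1 : ℕ) k := by
  rw [qbinom_natCast (by omega), qbinom_natCast (by omega), qbinom_natCast (by omega),
    show k + j + 2 - (k + 1) = j + 1 by omega, show k + j + 1 - (k + 1) = j by omega,
    show k + j + 1 - k = j + 1 by omega, qfact_succ (k + j + 1), qfact_succ k, qfact_succ j]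
  have hsum := qint_add_of_sign hε (k + 1) (j + 1)
  push_cast at hsum ⊢
  rw [show (k : ℤ) + j + 1 + 1 = k + 1 + (j + 1) by ring, hsum]
  have := qfact_ne_zero k
  have := qfact_ne_zero j
  have := qint_ne_zero (m := k + 1) (by omega)
  have := qint_ne_zero (m := j + 1) (by omega)
  field_simp

theorem qbinom_add_one {ε : ℤ} (hε : ε = 1 ∨ ε = -1) {m : ℤ} (hm : 0 ≤ m) (n : ℤ) :
    qbinom (m + 1) n = v ^ (ε * n) * qbinom m n + v ^ (ε * (n - m - 1)) * qbinom m (n - 1) := by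
  rcases lt_trichotomy n 0 with hn | rfl | hn
  · simp [qbinom_of_neg, hn, show n - 1 < 0 by omega]
  · simp [qbinom_zero_right, hm, qbinom_of_neg, show 0 ≤ m + 1 by omega]
  rcases lt_trichotomy n (m + 1) with hnm | rfl | hnm
  · obtain ⟨k, rfl⟩ : ∃ k : ℕ, n = k + 1 := ⟨(n - 1).toNat, by omega⟩
    obtain ⟨j, rfl⟩ : ∃ j : ℕ, m = k + j + 1 := ⟨(m - k - 1).toNat, by omega⟩
    convert qbinom_succ_add_succ hε k j using 3 <;> push_cast <;> ring_nf
  · rw [qbinom_self (by omega), qbinom_of_lt (by omega), add_sub_cancel_right,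
      qbinom_self hm, show m + 1 - m - 1 = 0 by ring]
    simp
  · simp [qbinom_of_lt, hnm, show m < n by omega, show m < n - 1 by omega]

theorem qbinom_add_one' {ε : ℤ} (hε : ε = 1 ∨ ε = -1) {m : ℤ} (hm : 0 ≤ m) (n : ℤ) :
    qbinom m n = v ^ (ε * n) * qbinom (m + 1) n - v ^ (ε * (m + 1)) * qbinom m (n - 1) := by
  have hpascal := qbinom_add_one (ε := -ε) (by omega) hm n
  have h1 := v_zpow_mul_zpow_eq (a := ε * n) (b := -ε * n) (c := 0) (d := 0) (by ring)
  have h2 := v_zpow_mul_zpow_eq (a := ε * n) (b := -ε * (n - m - 1)) (c := ε * (m + 1)) (d := 0)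
    (by ring)
  simp only [zpow_zero, mul_one] at h1 h2
  linear_combination -v ^ (ε * n) * hpascal - qbinom m n * h1 - qbinom m (n - 1) * h2

def qbinomSubTerm (ε : ℤ) (u : ℕ) (r s : ℤ) (p : ℕ) : K :=
  (-1) ^ p * v ^ (ε * (p * (s - u - r + 1) + r * u)) * qbinom u p * qbinom (s - p) (r - p)

theorem qbinomSubTerm_of_lt_left {ε : ℤ} {u : ℕ} {r s : ℤ} {p : ℕ} (h : u < p) :
    qbinomSubTerm ε u r s p = 0 := by
  simp [qbinomSubTerm, qbinom_of_lt (Nat.cast_lt.2 h)]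

theorem qbinomSubTerm_of_lt_right {ε : ℤ} {u : ℕ} {r s : ℤ} {p : ℕ} (h : r < p) :
    qbinomSubTerm ε u r s p = 0 := by
  simp [qbinomSubTerm, qbinom_of_neg (sub_neg.2 h)]

theorem qbinomSubTerm_succ_zero (ε : ℤ) (u : ℕ) (r s : ℤ) :
    qbinomSubTerm ε (u + 1) r s 0 = v ^ (ε * r) * qbinomSubTerm ε u r s 0 := by
  simp only [qbinomSubTerm, pow_zero, one_mul, CharP.cast_eq_zero, zero_mul, zero_add, sub_zero,
    qbinom_zero_right (Nat.cast_nonneg _), mul_one]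
  rw [← mul_assoc (v ^ _), ← zpow_add₀ v_ne_zero]
  push_cast
  ring_nf

theorem qbinomSubTerm_succ_succ {ε : ℤ} (hε : ε = 1 ∨ ε = -1) (u : ℕ) (r s : ℤ) (p : ℕ) :
    qbinomSubTerm ε (u + 1) r s (p + 1) =
      v ^ (ε * r) * qbinomSubTerm ε u r s (p + 1) -
        v ^ (ε * (s - u)) * qbinomSubTerm ε u (r - 1) (s - 1) p := by
  simp only [qbinomSubTerm]
  push_cast
  rw [qbinom_add_one hε (Nat.cast_nonneg u), add_sub_cancel_right,
    show s - (p + 1) = s - 1 - p by ring, show r - (p + 1) = r - 1 - p by ring]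
  have h1 := v_zpow_mul_zpow_eq
    (a := ε * ((p + 1) * (s - (u + 1) - r + 1) + r * (u + 1))) (b := ε * (p + 1))
    (c := ε * r) (d := ε * ((p + 1) * (s - u - r + 1) + r * u)) (by ring)
  have h2 := v_zpow_mul_zpow_eq
    (a := ε * ((p + 1) * (s - (u + 1) - r + 1) + r * (u + 1))) (b := ε * (p + 1 - u - 1))
    (c := ε * (s - u)) (d := ε * (p * (s - 1 - u - (r - 1) + 1) + (r - 1) * u)) (by ring)
  linear_combination (-1) ^ (p + 1) * qbinom (s - 1 - p) (r - 1 - p) *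
    (qbinom u (p + 1) * h1 + qbinom u p * h2)

theorem qbinom_sub_eq_sum {ε : ℤ} (hε : ε = 1 ∨ ε = -1) (u : ℕ) (r s : ℤ) (hus : u ≤ s) :
    qbinom (s - u) r = ∑ p ∈ range (u + 1), qbinomSubTerm ε u r s p := by
  induction u generalizing r s with
  | zero => simp [qbinomSubTerm, qbinom_zero_right]
  | succ u ih =>
    push_cast at hus ⊢
    have hshift : ∑ p ∈ range (u + 1), qbinomSubTerm ε u r s p =
        ∑ p ∈ range (u + 1), qbinomSubTerm ε u r s (p + 1) + qbinomSubTerm ε u r s 0 := by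
      rw [← sum_range_succ', sum_range_succ _ (u + 1),
        qbinomSubTerm_of_lt_left (lt_add_one u), add_zero]
    calc qbinom (s - (u + 1)) r
        = v ^ (ε * r) * qbinom (s - u) r - v ^ (ε * (s - u)) * qbinom (s - 1 - u) (r - 1) := by
          rw [show s - (u + 1) = s - 1 - u by ring, qbinom_add_one' hε (by omega),
            show s - 1 - u + 1 = s - u by ring]
      _ = v ^ (ε * r) * ∑ p ∈ range (u + 1), qbinomSubTerm ε u r s p -
          v ^ (ε * (s - u)) * ∑ p ∈ range (u + 1), qbinomSubTerm ε u (r - 1) (s - 1) p := by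
          rw [ih r s (by omega), ih (r - 1) (s - 1) (by omega)]
      _ = ∑ p ∈ range (u + 1 + 1), qbinomSubTerm ε (u + 1) r s p := by
          rw [hshift, sum_range_succ' (qbinomSubTerm ε (u + 1) r s), qbinomSubTerm_succ_zero]
          simp only [qbinomSubTerm_succ_succ hε, sum_sub_distrib, ← mul_sum]
          ring

/-- the `q`-binomial identity (1.160a of Ma). -/
theorem stmt5 (u r s : ℕ) (hus : u ≤ s) (ε : ℤ) (hε : ε = 1 ∨ ε = -1) :
    qbinom ((s : ℤ) - u) r =
      ∑ p ∈ Finset.range (r + 1),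
        (-1 : K) ^ p * v ^ (ε * (p * ((s : ℤ) - u - r + 1) + (r : ℤ) * u)) *
          qbinom u p * qbinom ((s : ℤ) - p) ((r : ℤ) - p) := by
  have hleft : ∑ p ∈ range (r + 1), qbinomSubTerm ε u r s p =
      ∑ p ∈ range (u + r + 1), qbinomSubTerm ε u r s p :=
    sum_subset (range_subset_range.2 (by omega)) fun p _ hp =>
      qbinomSubTerm_of_lt_right (by simp at hp; omega)
  have hright : ∑ p ∈ range (u + 1), qbinomSubTerm ε u r s p =
      ∑ p ∈ range (u + r + 1), qbinomSubTerm ε u r s p :=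
    sum_subset (range_subset_range.2 (by omega)) fun p _ hp =>
      qbinomSubTerm_of_lt_left (by simp at hp; omega)
  rw [qbinom_sub_eq_sum hε u r s (by omega)]
  exact hright.trans hleft.symm
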